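/- arXiv:1708.09525 — 2 statements merged into one kernel-verified Lean document; each statement's English description precedes it below -/
import Mathlib

section
/- Let Z be a totally positive 6×n real matrix, and let V, V′ ⊆ ℝ^n be 2-dimensional totally nonnegative subspaces, each of which is orthodox or deviant, with Z(V) = Z(V′). Then the smallest index j such that v_j ≠ 0 for some v ∈ V equals the smallest index j such that v_j ≠ 0 for some v ∈ V′, and the largest index j ≤ n − 1 such that v_j ≠ 0 for some v ∈ V equals the largest index j ≤ n − 1 such that v_j ≠ 0 for some v ∈ V′. -/
/-!
If `Z` is a totally positive `a × n` matrix with `a ≤ n`, every nonzero `u ∈ ker Z` has at least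
`a` sign changes (Gantmacher–Krein): otherwise the coordinates split into `a` nonempty consecutive
blocks on which `u` has constant sign, and `u = δ W` for a nonnegative matrix `W` whose rows live
on the blocks. Then `δ (W Zᵀ) = Z u = 0`, whereas expanding `det (W Zᵀ)` multilinearly gives a
nonnegative combination of maximal minors of `Z` with a positive term. A vector of a totally
nonnegative plane has at most one sign change, by the three-term Plücker relation for the `2 × 2`
minors.

If the first support indices of `V` and `V'` satisfy `a < a'`, pick `y ∈ V'` with `Z y = Z d`.
Since `y` vanishes up to `a` and changes sign at most once, while `d` is positive only at
`a, a + 1, p, p + 1` and negative only at `p, p + 1, n - 1`, the vector `d - y ∈ ker Z` has at most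
five sign changes. So `d = y`, contradicting `d_a > 0 = y_a`. The last support indices are
compared in the same way.
-/

/-- `d` is an `i`-domino (0-based indices). -/
def IsDominoAt {n : ℕ} (i : Fin n) (d : Fin n → ℝ) : Prop :=
  if h : (i : ℕ) + 1 < n then
    0 < d i * d ⟨(i : ℕ) + 1, h⟩ ∧
      ∀ j : Fin n, (j : ℕ) ≠ (i : ℕ) → (j : ℕ) ≠ (i : ℕ) + 1 → d j = 0
  else
    d i ≠ 0 ∧ ∀ j : Fin n, j ≠ i → d j = 0

/-- A nonzero domino. -/
def IsDomino {n : ℕ} (d : Fin n → ℝ) : Prop := ∃ i : Fin n, IsDominoAt i d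

/-- A positive domino with index `i`. -/
def IsPosDominoAt {n : ℕ} (i : Fin n) (d : Fin n → ℝ) : Prop :=
  IsDominoAt i d ∧ 0 < d i

/-- `barVec v` is `v` with its last coordinate replaced by `0`. -/
def barVec {n : ℕ} (v : Fin n → ℝ) : Fin n → ℝ :=
  fun j => if (j : ℕ) = n - 1 then 0 else v j

/-- All maximal minors of `A` are nonnegative. -/
def MinorsNonneg {k n : ℕ} (A : Matrix (Fin k) (Fin n) ℝ) : Prop :=
  ∀ f : Fin k → Fin n, StrictMono f → 0 ≤ (A.submatrix id f).det

/-- All maximal (`a × a`) minors of the `a × n` matrix `Z` are positive. -/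
def MinorsPos {a n : ℕ} (Z : Matrix (Fin a) (Fin n) ℝ) : Prop :=
  ∀ f : Fin a → Fin n, StrictMono f → 0 < (Z.submatrix id f).det

/-- `V` is a `k`-dimensional totally nonnegative subspace of `ℝ^n`. -/
def IsTNNSubspace (k n : ℕ) (V : Submodule ℝ (Fin n → ℝ)) : Prop :=
  ∃ A : Matrix (Fin k) (Fin n) ℝ,
    LinearIndependent ℝ (fun i => A i) ∧
    Submodule.span ℝ (Set.range fun i => A i) = V ∧
    MinorsNonneg A

/-- `V` is orthodox with standard basis vectors `d, e` and fundamental dominoes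
`d1, d2, d3, d4`: the `dᵢ` are linearly independent positive dominoes with 0-based
indices `i1 + 1 < i2 ≤ i3 < i4 - 1` and `i4 ≤ n - 3` (1-based: `i_4 ≤ n - 2`),
`V = span{d, e}`, `d̄ = d1 + d2` with `d` negative in its last coordinate, and
`ē = d3 + d4` with `e` positive in its last coordinate. -/
def OrthodoxWith {n : ℕ} (V : Submodule ℝ (Fin n → ℝ))
    (d e d1 d2 d3 d4 : Fin n → ℝ) : Prop :=
  (∃ i1 i2 i3 i4 : Fin n,
    IsPosDominoAt i1 d1 ∧ IsPosDominoAt i2 d2 ∧ IsPosDominoAt i3 d3 ∧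
    IsPosDominoAt i4 d4 ∧
    (i1 : ℕ) + 1 < (i2 : ℕ) ∧ (i2 : ℕ) ≤ (i3 : ℕ) ∧ (i3 : ℕ) + 1 < (i4 : ℕ) ∧
    (i4 : ℕ) + 3 ≤ n) ∧
  LinearIndependent ℝ ![d1, d2, d3, d4] ∧
  V = Submodule.span ℝ {d, e} ∧
  barVec d = d1 + d2 ∧ (∀ j : Fin n, (j : ℕ) = n - 1 → d j < 0) ∧
  barVec e = d3 + d4 ∧ (∀ j : Fin n, (j : ℕ) = n - 1 → 0 < e j)

/-- `V` is deviant with standard basis vectors `d, e` and fundamental dominoes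
`d1, d2, d3, d4`: the `dᵢ` are linearly independent positive dominoes with 0-based
indices `i1 < i2`, `i2 + 1 < i3 ≤ i4 ≤ n - 3` (1-based: `i_4 ≤ n - 2`),
`V = span{d, e}`, `d̄ = d1 - d4` with `d` negative in its last coordinate, and
`e = d1 + d2 + d3`. -/
def DeviantWith {n : ℕ} (V : Submodule ℝ (Fin n → ℝ))
    (d e d1 d2 d3 d4 : Fin n → ℝ) : Prop :=
  (∃ i1 i2 i3 i4 : Fin n,
    IsPosDominoAt i1 d1 ∧ IsPosDominoAt i2 d2 ∧ IsPosDominoAt i3 d3 ∧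
    IsPosDominoAt i4 d4 ∧
    (i1 : ℕ) < (i2 : ℕ) ∧ (i2 : ℕ) + 1 < (i3 : ℕ) ∧ (i3 : ℕ) ≤ (i4 : ℕ) ∧
    (i4 : ℕ) + 3 ≤ n) ∧
  LinearIndependent ℝ ![d1, d2, d3, d4] ∧
  V = Submodule.span ℝ {d, e} ∧
  barVec d = d1 - d4 ∧ (∀ j : Fin n, (j : ℕ) = n - 1 → d j < 0) ∧
  e = d1 + d2 + d3

/-- `V` is orthodox (for some choice of data). -/
def IsOrthodox {n : ℕ} (V : Submodule ℝ (Fin n → ℝ)) : Prop :=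
  ∃ d e d1 d2 d3 d4 : Fin n → ℝ, OrthodoxWith V d e d1 d2 d3 d4

/-- `V` is deviant (for some choice of data). -/
def IsDeviant {n : ℕ} (V : Submodule ℝ (Fin n → ℝ)) : Prop :=
  ∃ d e d1 d2 d3 d4 : Fin n → ℝ, DeviantWith V d e d1 d2 d3 d4

open Matrix

variable {n : ℕ}

section SignChanges

def IsSignAlternating (u : Fin n → ℝ) {k : ℕ} (f : Fin (k + 1) → Fin n) : Prop :=
  ∀ i : Fin k, f i.castSucc < f i.succ ∧ u (f i.castSucc) * u (f i.succ) < 0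

def HasSignChanges (u : Fin n → ℝ) (k : ℕ) : Prop :=
  ∃ f : Fin (k + 1) → Fin n, IsSignAlternating u f

variable {u : Fin n → ℝ} {k : ℕ} {f : Fin (k + 1) → Fin n}

theorem IsSignAlternating.strictMono (hf : IsSignAlternating u f) : StrictMono f :=
  Fin.strictMono_iff_lt_succ.2 fun i => (hf i).1

theorem IsSignAlternating.succ_le (hf : IsSignAlternating u f) : k + 1 ≤ n := by
  simpa using Fintype.card_le_of_injective f hf.strictMono.injective

theorem IsSignAlternating.snoc (hf : IsSignAlternating u f) {j : Fin n}
    (hlt : f (Fin.last k) < j) (hu : u (f (Fin.last k)) * u j < 0) :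
    IsSignAlternating u (Fin.snoc (α := fun _ => Fin n) f j) := by
  intro i
  induction i using Fin.lastCases with
  | last => simpa using ⟨hlt, hu⟩
  | cast i =>
    rw [Fin.succ_castSucc, Fin.snoc_castSucc, Fin.snoc_castSucc]
    exact hf i

theorem IsSignAlternating.comp_castLE (hf : IsSignAlternating u f) {m : ℕ} (hm : m ≤ k) :
    IsSignAlternating u (f ∘ Fin.castLE (Nat.succ_le_succ hm)) := by
  intro i
  simpa [Fin.castLE_succ] using hf (Fin.castLE hm i)

theorem IsSignAlternating.apply_last_ne_zero (hf : IsSignAlternating u f) (hk : k ≠ 0) :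
    u (f (Fin.last k)) ≠ 0 := by
  obtain ⟨k, rfl⟩ := Nat.exists_eq_add_one_of_ne_zero hk
  intro h
  simpa [h] using (hf (Fin.last k)).2

theorem HasSignChanges.mono {m : ℕ} (h : HasSignChanges u k) (hm : m ≤ k) :
    HasSignChanges u m :=
  let ⟨_, hf⟩ := h; ⟨_, hf.comp_castLE hm⟩


section Prefix

open Classical

/-- The number of sign changes of `u` on the indices `≤ m`. -/
noncomputable def signChangesUpTo (u : Fin n → ℝ) (m : ℕ) : ℕ :=
  Nat.findGreatest
    (fun k => ∃ f : Fin (k + 1) → Fin n, IsSignAlternating u f ∧ (f (Fin.last k) : ℕ) ≤ m) n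

theorem le_signChangesUpTo (hf : IsSignAlternating u f) {m : ℕ}
    (hm : (f (Fin.last k) : ℕ) ≤ m) : k ≤ signChangesUpTo u m :=
  Nat.le_findGreatest (by have := hf.succ_le; omega) ⟨f, hf, hm⟩

theorem exists_isSignAlternating_signChangesUpTo {m : ℕ} (hm : m < n) :
    ∃ f : Fin (signChangesUpTo u m + 1) → Fin n,
      IsSignAlternating u f ∧ (f (Fin.last _) : ℕ) ≤ m :=
  Nat.findGreatest_spec
    (P := fun k => ∃ f : Fin (k + 1) → Fin n, IsSignAlternating u f ∧ (f (Fin.last k) : ℕ) ≤ m)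
    (Nat.zero_le n) ⟨fun _ => ⟨m, hm⟩, fun i => i.elim0, le_rfl⟩

theorem signChangesUpTo_mono : Monotone (signChangesUpTo u) := fun _ _ hmm' =>
  Nat.findGreatest_mono_left (fun _ ⟨f, hf, hm⟩ => ⟨f, hf, hm.trans hmm'⟩) n

theorem signChangesUpTo_zero : signChangesUpTo u 0 = 0 := by
  refine Nat.findGreatest_eq_zero_iff.2 fun k hk _ ⟨f, hf, hf0⟩ => ?_
  have := hf.strictMono (Fin.castSucc_lt_last (⟨0, hk⟩ : Fin k))
  omega

theorem signChangesUpTo_succ_le (m : ℕ) :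
    signChangesUpTo u (m + 1) ≤ signChangesUpTo u m + 1 := by
  obtain hk | hk := Nat.eq_zero_or_pos (signChangesUpTo u (m + 1))
  · omega
  obtain ⟨k, hk⟩ := Nat.exists_eq_add_one_of_ne_zero hk.ne'
  obtain ⟨f, hf, hfm⟩ := Nat.findGreatest_of_ne_zero hk k.succ_ne_zero
  have hlast := hf.strictMono (Fin.castSucc_lt_last (Fin.last k))
  have := le_signChangesUpTo (hf.comp_castLE k.le_succ) (m := m) (by
    change (f (Fin.last k).castSucc : ℕ) ≤ m
    have : (f (Fin.last k).castSucc : ℕ) < f (Fin.last (k + 1)) := hlast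
    omega)
  omega

theorem signChangesUpTo_lt {a m : ℕ} (h : ¬HasSignChanges u a) (hm : m < n) :
    signChangesUpTo u m < a := by
  obtain ⟨f, hf, -⟩ := exists_isSignAlternating_signChangesUpTo (u := u) hm
  by_contra! ha
  exact h (HasSignChanges.mono ⟨f, hf⟩ ha)

theorem mul_pos_of_signChangesUpTo_eq {j j' : Fin n} (hjj' : j < j')
    (heq : signChangesUpTo u j = signChangesUpTo u j') (hj : u j ≠ 0) (hj' : u j' ≠ 0) :
    0 < u j * u j' := by
  by_contra! hneg
  replace hneg : u j * u j' < 0 := lt_of_le_of_ne hneg (mul_ne_zero hj hj')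
  obtain ⟨f, hf, hfj⟩ := exists_isSignAlternating_signChangesUpTo (u := u) j.2
  have hlj : f (Fin.last _) ≤ j := hfj
  by_cases hl' : u (f (Fin.last _)) * u j' < 0
  · have := le_signChangesUpTo (hf.snoc (hlj.trans_lt hjj') hl') (m := j')
      (by rw [Fin.snoc_last])
    omega
  by_cases hl : u (f (Fin.last _)) = 0
  · have hk : signChangesUpTo u j = 0 := by_contra fun hk => hf.apply_last_ne_zero hk hl
    have hj0 : IsSignAlternating u (fun _ : Fin 1 => j) := fun i => i.elim0
    have := le_signChangesUpTo (hj0.snoc hjj' hneg) (m := j') (by rw [Fin.snoc_last])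
    omega
  have hlj' : u (f (Fin.last _)) * u j < 0 := by
    have : 0 < u (f (Fin.last _)) * u j' :=
      lt_of_le_of_ne (not_lt.1 hl') (mul_ne_zero hl hj').symm
    nlinarith [mul_pos this (mul_self_pos.2 hj')]
  have hlj : f (Fin.last _) < j := lt_of_le_of_ne hlj fun h => by
    rw [h] at hlj'; nlinarith [mul_self_nonneg (u j)]
  have := le_signChangesUpTo (hf.snoc hlj hlj') (m := j) (by rw [Fin.snoc_last])
  omega

end Prefix

theorem Nat.exists_eq_of_le_of_map_succ_le {g : ℕ → ℕ} (h0 : g 0 = 0)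
    (hg : ∀ m, g (m + 1) ≤ g m + 1) {s : ℕ} : ∀ {N : ℕ}, s ≤ g N → ∃ m ≤ N, g m = s
  | 0, hs => ⟨0, le_rfl, by omega⟩
  | N + 1, hs => by
    by_cases hsN : s ≤ g N
    · obtain ⟨m, hm, hgm⟩ := Nat.exists_eq_of_le_of_map_succ_le h0 hg hsN
      exact ⟨m, hm.trans N.le_succ, hgm⟩
    · exact ⟨N + 1, le_rfl, by have := hg N; omega⟩

theorem exists_monotone_surjective_signBlocks {a : ℕ} (ha : a ≤ n) (h : ¬HasSignChanges u a) :
    ∃ c : Fin n → Fin a, Monotone c ∧ Function.Surjective c ∧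
      ∀ j j', c j = c j' → 0 ≤ u j * u j' := by
  -- the term `m + a - n` makes `c` surjective and only splits level sets of `signChangesUpTo`
  set g : ℕ → ℕ := fun m => max (signChangesUpTo u m) (m + a - n) with hg
  have hga : ∀ j : Fin n, g j < a := fun j => by
    have := signChangesUpTo_lt h j.2; simp only [hg]; omega
  have hmono := signChangesUpTo_mono (u := u)
  refine ⟨fun j => ⟨g j, hga j⟩, fun j j' hjj' => ?_, fun s => ?_, ?_⟩
  · have := hmono (Fin.le_def.1 hjj')
    simp only [hg, Fin.mk_le_mk]
    omega
  · have hn : 0 < n := by have := s.2; omega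
    obtain ⟨m, hm, hgm⟩ := Nat.exists_eq_of_le_of_map_succ_le (g := g)
      (by simp [hg, signChangesUpTo_zero]; omega)
      (fun m => by have := signChangesUpTo_succ_le (u := u) m; simp only [hg]; omega)
      (s := s) (N := n - 1) (by simp only [hg]; omega)
    exact ⟨⟨m, by omega⟩, Fin.ext hgm⟩
  · have key : ∀ j j' : Fin n, j < j' → g j = g j' → 0 ≤ u j * u j' := by
      intro j j' hjj' hgg
      have hV : signChangesUpTo u j = signChangesUpTo u j' := by
        have := hmono (Fin.le_def.1 hjj'.le)
        have : (j : ℕ) < j' := hjj'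
        simp only [hg] at hgg
        omega
      by_cases hj : u j = 0
      · simp [hj]
      by_cases hj' : u j' = 0
      · simp [hj']
      exact (mul_pos_of_signChangesUpTo_eq hjj' hV hj hj').le
    intro j j' hc
    have hc : g j = g j' := congrArg Fin.val hc
    rcases lt_trichotomy j j' with hlt | rfl | hgt
    · exact key j j' hlt hc
    · exact mul_self_nonneg _
    · rw [mul_comm]; exact key j' j hgt hc.symm

end SignChanges

theorem det_mul_eq_sum {a : ℕ} (W : Matrix (Fin a) (Fin n) ℝ) (Z : Matrix (Fin a) (Fin n) ℝ) :
    (W * Zᵀ).det = ∑ r : Fin a → Fin n, (∏ s, W s (r s)) * (Z.submatrix id r).det := by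
  classical
  have hrows : W * Zᵀ = fun s => ∑ j, W s j • Zᵀ j := by
    ext s i; simp [Matrix.mul_apply, Finset.sum_apply]
  rw [hrows]
  change detRowAlternating.toMultilinearMap _ = _
  rw [MultilinearMap.map_sum]
  refine Finset.sum_congr rfl fun r _ => ?_
  rw [AlternatingMap.coe_multilinearMap, AlternatingMap.map_smul_univ, smul_eq_mul,
    ← det_transpose (Z.submatrix id r)]
  rfl

theorem MinorsPos.det_mul_transpose_pos {a : ℕ} {Z : Matrix (Fin a) (Fin n) ℝ}
    (hZ : MinorsPos Z) {c : Fin n → Fin a} (hc : Monotone c) {W : Matrix (Fin a) (Fin n) ℝ}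
    (hW : ∀ s j, 0 ≤ W s j) (hWc : ∀ s j, W s j ≠ 0 → c j = s) (hWpos : ∀ s, ∃ j, 0 < W s j) :
    0 < (W * Zᵀ).det := by
  have hsel : ∀ r : Fin a → Fin n, (∀ s, c (r s) = s) → StrictMono r := fun r hr s s' hss' =>
    lt_of_not_ge fun h => hss'.not_ge (by simpa [hr] using hc h)
  rw [det_mul_eq_sum]
  choose r hr using hWpos
  refine Finset.sum_pos' (fun r' _ => ?_) ⟨r, Finset.mem_univ _, ?_⟩
  · by_cases hr' : ∀ s, c (r' s) = s
    · exact mul_nonneg (Finset.prod_nonneg fun s _ => hW s _) (hZ r' (hsel r' hr')).le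
    · obtain ⟨s, hs⟩ := not_forall.1 hr'
      rw [Finset.prod_eq_zero (Finset.mem_univ s) (by_contra fun h => hs (hWc s _ h)), zero_mul]
  · exact mul_pos (Finset.prod_pos fun s _ => hr s)
      (hZ r (hsel r fun s => hWc s _ (hr s).ne'))

theorem MinorsPos.eq_zero_of_mulVec_eq_zero_of_signBlocks {a : ℕ} {Z : Matrix (Fin a) (Fin n) ℝ}
    (hZ : MinorsPos Z) {u : Fin n → ℝ} {c : Fin n → Fin a} (hc : Monotone c)
    (hcs : Function.Surjective c) (hcu : ∀ j j', c j = c j' → 0 ≤ u j * u j')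
    (hu : Z *ᵥ u = 0) : u = 0 := by
  classical
  have hrep : ∀ s, ∃ j, c j = s ∧ (u j = 0 → ∀ j', c j' = s → u j' = 0) := by
    intro s
    by_cases h : ∃ j, c j = s ∧ u j ≠ 0
    · obtain ⟨j, hj, hu⟩ := h
      exact ⟨j, hj, fun h0 => absurd h0 hu⟩
    · obtain ⟨j, hj⟩ := hcs s
      exact ⟨j, hj, fun _ j' hj' => by_contra fun h' => h ⟨j', hj', h'⟩⟩
  choose r hrc hr0 using hrep
  let W : Matrix (Fin a) (Fin n) ℝ := fun s j =>
    if c j = s then (if u (r s) = 0 then (if j = r s then 1 else 0) else u (r s) * u j) else 0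
  -- on a block where `u` vanishes, `δ` is `0⁻¹ = 0`
  let δ : Fin a → ℝ := fun s => (u (r s))⁻¹
  have hδW : δ ᵥ* W = u := by
    ext j
    rw [vecMul, dotProduct, Finset.sum_eq_single (c j) (fun s _ hs => by simp [W, Ne.symm hs])
      (by simp)]
    by_cases h0 : u (r (c j)) = 0
    · simp [δ, h0, hr0 _ h0 j rfl]
    · simp [W, δ, h0]
  have hdet : 0 < (W * Zᵀ).det := by
    refine hZ.det_mul_transpose_pos hc (fun s j => ?_) (fun s j hW => ?_) (fun s => ⟨r s, ?_⟩)
    · simp only [W]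
      split_ifs with hj
      exacts [zero_le_one, le_rfl, hcu _ _ (by rw [hj, hrc]), le_rfl]
    · by_contra hj
      simp [W, hj] at hW
    · by_cases h0 : u (r s) = 0
      · simp [W, h0, hrc]
      · simp [W, hrc, h0]
  have hδ : δ = 0 := by
    by_contra hδ
    refine hdet.ne' (exists_vecMul_eq_zero_iff.1 ⟨δ, hδ, ?_⟩)
    rw [← vecMul_vecMul, hδW, vecMul_transpose, hu]
  rw [← hδW, hδ, zero_vecMul]

theorem MinorsPos.hasSignChanges_of_mulVec_eq_zero {a : ℕ} {Z : Matrix (Fin a) (Fin n) ℝ}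
    (hZ : MinorsPos Z) (ha : a ≤ n) {u : Fin n → ℝ} (hu : Z *ᵥ u = 0) (hu0 : u ≠ 0) :
    HasSignChanges u a := by
  by_contra h
  obtain ⟨c, hc, hcs, hcu⟩ := exists_monotone_surjective_signBlocks ha h
  exact hu0 (hZ.eq_zero_of_mulVec_eq_zero_of_signBlocks hc hcs hcu hu)

theorem hasSignChanges_two_iff {y : Fin n → ℝ} :
    HasSignChanges y 2 ↔
      ∃ j₁ j₂ j₃ : Fin n, j₁ < j₂ ∧ j₂ < j₃ ∧ y j₁ * y j₂ < 0 ∧ y j₂ * y j₃ < 0 := by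
  constructor
  · rintro ⟨f, hf⟩
    exact ⟨f 0, f 1, f 2, (hf 0).1, (hf 1).1, (hf 0).2, (hf 1).2⟩
  · rintro ⟨j₁, j₂, j₃, h₁₂, h₂₃, p₁₂, p₂₃⟩
    refine ⟨![j₁, j₂, j₃], ?_⟩
    simp [IsSignAlternating, Fin.forall_fin_two, *]

theorem col_eq_zero_of_linearIndependent {A : Matrix (Fin 2) (Fin n) ℝ}
    (hA : LinearIndependent ℝ fun i => A i) {j : Fin n}
    (h : ∀ l, A 0 j * A 1 l - A 0 l * A 1 j = 0) : A 0 j = 0 ∧ A 1 j = 0 := by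
  have hzero := Fintype.linearIndependent_iff.1 hA ![A 1 j, -A 0 j] (by
    ext l
    simp only [Fin.sum_univ_two, Pi.add_apply, Pi.smul_apply, smul_eq_mul, Pi.zero_apply,
      Matrix.cons_val_zero, Matrix.cons_val_one]
    linear_combination -h l)
  exact ⟨by simpa using hzero 1, by simpa using hzero 0⟩

theorem IsTNNSubspace.not_hasSignChanges_two {V : Submodule ℝ (Fin n → ℝ)}
    (hV : IsTNNSubspace 2 n V) {y : Fin n → ℝ} (hy : y ∈ V) : ¬HasSignChanges y 2 := by
  obtain ⟨A, hind, hspan, hmin⟩ := hV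
  rw [← hspan, Submodule.mem_span_range_iff_exists_fun] at hy
  obtain ⟨c, hc⟩ := hy
  have hy : ∀ j, y j = c 0 * A 0 j + c 1 * A 1 j := fun j => by
    simp [← hc, Fin.sum_univ_two]
  set m : Fin n → Fin n → ℝ := fun j l => A 0 j * A 1 l - A 0 l * A 1 j with hm_def
  have hm : ∀ j l, j < l → 0 ≤ m j l := fun j l hjl => by
    have := hmin ![j, l] (Fin.strictMono_iff_lt_succ.2 (by simpa [Fin.forall_fin_one] using hjl))
    simpa [det_fin_two, hm_def] using this
  have hm' : ∀ j l, l < j → m j l ≤ 0 := fun j l hlj => by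
    have := hm l j hlj; simp only [hm_def] at this ⊢; linarith
  have plucker : ∀ i j l, y i * m j l - y j * m i l + y l * m i j = 0 := fun i j l => by
    simp only [hy, hm_def]; ring
  rw [hasSignChanges_two_iff]
  rintro ⟨j₁, j₂, j₃, h₁₂, h₂₃, p₁₂, p₂₃⟩
  have p₁₃ : 0 < y j₁ * y j₃ := by nlinarith [mul_pos_of_neg_of_neg p₁₂ p₂₃, sq_nonneg (y j₂)]
  -- times `y j₂`, the Plücker relation for `j₁, j₂, j₃` is a sum of three terms of one sign
  have e : y j₁ * y j₂ * m j₂ j₃ + y j₂ * y j₃ * m j₁ j₂ = y j₂ * y j₂ * m j₁ j₃ := by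
    linear_combination y j₂ * plucker j₁ j₂ j₃
  have t₁ : y j₁ * y j₂ * m j₂ j₃ ≤ 0 := mul_nonpos_of_nonpos_of_nonneg p₁₂.le (hm _ _ h₂₃)
  have t₂ : y j₂ * y j₃ * m j₁ j₂ ≤ 0 := mul_nonpos_of_nonpos_of_nonneg p₂₃.le (hm _ _ h₁₂)
  have t₃ : 0 ≤ y j₂ * y j₂ * m j₁ j₃ := mul_nonneg (mul_self_nonneg _) (hm _ _ (h₁₂.trans h₂₃))
  have z₁₂ : m j₁ j₂ = 0 := (mul_eq_zero.1 (by linarith)).resolve_left p₂₃.ne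
  have z₁₃ : m j₁ j₃ = 0 :=
    (mul_eq_zero.1 (by linarith)).resolve_left (mul_self_ne_zero.2 (right_ne_zero_of_mul p₁₂.ne))
  -- the column `j₁` of `A` is proportional to every other column
  have hcol : ∀ l, m j₁ l = 0 := by
    intro l
    have e₂ : y j₁ * y j₁ * m j₂ l = y j₁ * y j₂ * m j₁ l := by
      linear_combination y j₁ * plucker j₁ j₂ l - y j₁ * y l * z₁₂
    have e₃ : y j₁ * y j₁ * m j₃ l = y j₁ * y j₃ * m j₁ l := by
      linear_combination y j₁ * plucker j₁ j₃ l - y j₁ * y l * z₁₃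
    have hy₁ : 0 ≤ y j₁ * y j₁ := mul_self_nonneg _
    rcases lt_trichotomy l j₂ with hl | rfl | hl
    · nlinarith [hm' _ _ hl, hm' _ _ (hl.trans h₂₃)]
    · exact z₁₂
    · nlinarith [hm _ _ hl, hm _ _ (h₁₂.trans hl)]
  obtain ⟨h₀, h₁⟩ := col_eq_zero_of_linearIndependent hind hcol
  simp [hy j₁, h₀, h₁] at p₁₂

def SplitsAt (y : Fin n → ℝ) (σ : ℕ) : Prop :=
  (∀ j : Fin n, 0 < y j → (j : ℕ) < σ) ∧ ∀ j : Fin n, y j < 0 → σ ≤ (j : ℕ)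

theorem exists_splitsAt_of_forall_lt {y : Fin n → ℝ}
    (h : ∀ i j : Fin n, 0 < y i → y j < 0 → i < j) : ∃ σ, SplitsAt y σ := by
  classical
  by_cases hneg : ∃ m, ∃ j : Fin n, (j : ℕ) = m ∧ y j < 0
  · refine ⟨Nat.find hneg, fun i hi => ?_, fun j hj => Nat.find_min' hneg ⟨j, rfl, hj⟩⟩
    obtain ⟨j, hj, hyj⟩ := Nat.find_spec hneg
    rw [← hj]
    exact h i j hi hyj
  · exact ⟨n, fun i _ => i.2, fun j hj => (hneg ⟨j, j, rfl, hj⟩).elim⟩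

theorem exists_splitsAt {y : Fin n → ℝ} (hy : ¬HasSignChanges y 2) :
    ∃ σ, SplitsAt y σ ∨ SplitsAt (-y) σ := by
  by_cases h : ∀ i j : Fin n, 0 < y i → y j < 0 → i < j
  · obtain ⟨σ, hσ⟩ := exists_splitsAt_of_forall_lt h
    exact ⟨σ, Or.inl hσ⟩
  simp only [not_forall, not_lt] at h
  obtain ⟨i, j, hi, hj, hji⟩ := h
  have hji : j < i := lt_of_le_of_ne hji fun h => by rw [h] at hj; linarith
  obtain ⟨σ, hσ⟩ := exists_splitsAt_of_forall_lt (y := -y) fun k l hk hl => by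
    simp only [Pi.neg_apply, neg_pos, neg_lt_zero] at hk hl
    by_contra! hlk
    have hlk : l < k := lt_of_le_of_ne hlk fun h => by rw [h] at hl; linarith
    rw [hasSignChanges_two_iff] at hy
    rcases lt_trichotomy i k with hik | rfl | hki
    · exact hy ⟨j, i, k, hji, hik, mul_neg_of_neg_of_pos hj hi, mul_neg_of_pos_of_neg hi hk⟩
    · linarith
    · exact hy ⟨l, k, i, hlk, hki, mul_neg_of_pos_of_neg hl hk, mul_neg_of_neg_of_pos hk hi⟩
  exact ⟨σ, Or.inr hσ⟩

theorem exists_alternating_of_hasSignChanges_six_sub {x y : Fin n → ℝ} {N P : ℕ → Prop}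
    (hN : ∀ j : Fin n, x j < 0 ∨ 0 < y j → N j) (hP : ∀ j : Fin n, 0 < x j ∨ y j < 0 → P j)
    (h : HasSignChanges (x - y) 6) :
    ∃ j₀ j₁ j₂ j₃ j₄ j₅ j₆ : ℕ, j₀ < j₁ ∧ j₁ < j₂ ∧ j₂ < j₃ ∧ j₃ < j₄ ∧ j₄ < j₅ ∧ j₅ < j₆ ∧
      j₆ < n ∧ (N j₀ ∧ P j₁ ∧ N j₂ ∧ P j₃ ∧ N j₄ ∧ P j₅ ∧ N j₆ ∨
        P j₀ ∧ N j₁ ∧ P j₂ ∧ N j₃ ∧ P j₄ ∧ N j₅ ∧ P j₆) := by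
  obtain ⟨f, hf⟩ := h
  have hN' : ∀ j, (x - y) j < 0 → N j := fun j hj =>
    hN j (by by_contra! h; simp only [Pi.sub_apply] at hj; linarith [h.1, h.2])
  have hP' : ∀ j, 0 < (x - y) j → P j := fun j hj =>
    hP j (by by_contra! h; simp only [Pi.sub_apply] at hj; linarith [h.1, h.2])
  have hlt : ∀ i : Fin 6, (f i.castSucc : ℕ) < f i.succ := fun i => (hf i).1
  have hneg : ∀ i : Fin 6, (x - y) (f i.castSucc) < 0 → 0 < (x - y) (f i.succ) :=
    fun i hi => by nlinarith [(hf i).2]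
  have hpos : ∀ i : Fin 6, 0 < (x - y) (f i.castSucc) → (x - y) (f i.succ) < 0 :=
    fun i hi => by nlinarith [(hf i).2]
  refine ⟨f 0, f 1, f 2, f 3, f 4, f 5, f 6, hlt 0, hlt 1, hlt 2, hlt 3, hlt 4, hlt 5, (f 6).2, ?_⟩
  rcases mul_neg_iff.1 (hf 0).2 with ⟨h₀, h₁⟩ | ⟨h₀, h₁⟩
  · have h₂ := hneg 1 h₁
    have h₃ := hpos 2 h₂
    have h₄ := hneg 3 h₃
    have h₅ := hpos 4 h₄
    have h₆ := hneg 5 h₅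
    exact Or.inr ⟨hP' _ h₀, hN' _ h₁, hP' _ h₂, hN' _ h₃, hP' _ h₄, hN' _ h₅, hP' _ h₆⟩
  · have h₂ := hpos 1 h₁
    have h₃ := hneg 2 h₂
    have h₄ := hpos 3 h₃
    have h₅ := hneg 4 h₄
    have h₆ := hpos 5 h₅
    exact Or.inl ⟨hN' _ h₀, hP' _ h₁, hN' _ h₂, hP' _ h₃, hN' _ h₄, hP' _ h₅, hN' _ h₆⟩

/-- The sign pattern of `d` in an orthodox or deviant subspace, `a` being its first index. -/
def IsHeadVector (x : Fin n → ℝ) (a : ℕ) : Prop :=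
  ∃ p : ℕ, a + 1 < p ∧ p + 1 < n - 1 ∧ (∀ j : Fin n, (j : ℕ) = a → 0 < x j) ∧
    (∀ j : Fin n, 0 < x j → (j : ℕ) = a ∨ (j : ℕ) = a + 1 ∨ (j : ℕ) = p ∨ (j : ℕ) = p + 1) ∧
    ∀ j : Fin n, x j < 0 → (j : ℕ) = p ∨ (j : ℕ) = p + 1 ∨ (j : ℕ) = n - 1

/-- The sign pattern of `e` in an orthodox and of `d` in a deviant subspace, `b` being their last
index before the final coordinate. -/
def IsTailVector (x : Fin n → ℝ) (b : ℕ) : Prop :=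
  ∃ p q : ℕ, b = q + 1 ∧ p + 1 < q ∧ q + 1 < n - 1 ∧ (∀ j : Fin n, (j : ℕ) = b → x j ≠ 0) ∧
    ((∀ j : Fin n, 0 < x j → (j : ℕ) = p ∨ (j : ℕ) = p + 1 ∨ (j : ℕ) = q ∨ (j : ℕ) = q + 1 ∨
        (j : ℕ) = n - 1) ∧ (∀ j : Fin n, 0 ≤ x j) ∨
      (∀ j : Fin n, 0 < x j → (j : ℕ) = p ∨ (j : ℕ) = p + 1) ∧
        ∀ j : Fin n, x j < 0 → (j : ℕ) = q ∨ (j : ℕ) = q + 1 ∨ (j : ℕ) = n - 1)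

theorem IsHeadVector.not_hasSignChanges_six_sub {x y : Fin n → ℝ} {a : ℕ}
    (hx : IsHeadVector x a) (hy : ¬HasSignChanges y 2) (hy0 : ∀ j : Fin n, (j : ℕ) ≤ a → y j = 0) :
    ¬HasSignChanges (x - y) 6 := by
  obtain ⟨p, hap, hpn, -, hxpos, hxneg⟩ := hx
  have hya : ∀ j : Fin n, y j ≠ 0 → a < j := fun j hj => by
    by_contra! h; exact hj (hy0 j h)
  intro h
  obtain ⟨σ, ⟨hσp, hσn⟩ | ⟨hσp, hσn⟩⟩ := exists_splitsAt hy
  · obtain ⟨j₀, j₁, j₂, j₃, j₄, j₅, j₆, h₀₁, h₁₂, h₂₃, h₃₄, h₄₅, h₅₆, h₆, hj⟩ :=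
      exists_alternating_of_hasSignChanges_six_sub
        (N := fun j => j = p ∨ j = p + 1 ∨ j = n - 1 ∨ a < j ∧ j < σ)
        (P := fun j => j = a ∨ j = a + 1 ∨ j = p ∨ j = p + 1 ∨ a < j ∧ σ ≤ j)
        (by rintro j (hj | hj)
            · have := hxneg j hj; omega
            · have := hya j hj.ne'; have := hσp j hj; omega)
        (by rintro j (hj | hj)
            · have := hxpos j hj; omega
            · have := hya j hj.ne; have := hσn j hj; omega) h
    omega
  · obtain ⟨j₀, j₁, j₂, j₃, j₄, j₅, j₆, h₀₁, h₁₂, h₂₃, h₃₄, h₄₅, h₅₆, h₆, hj⟩ :=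
      exists_alternating_of_hasSignChanges_six_sub
        (N := fun j => j = p ∨ j = p + 1 ∨ j = n - 1 ∨ a < j ∧ σ ≤ j)
        (P := fun j => j = a ∨ j = a + 1 ∨ j = p ∨ j = p + 1 ∨ a < j ∧ j < σ)
        (by rintro j (hj | hj)
            · have := hxneg j hj; omega
            · have := hya j hj.ne'; have := hσn j (by simpa using hj); omega)
        (by rintro j (hj | hj)
            · have := hxpos j hj; omega
            · have := hya j hj.ne; have := hσp j (by simpa using hj); omega) h
    omega

theorem IsTailVector.not_hasSignChanges_six_sub {x y : Fin n → ℝ} {b : ℕ}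
    (hx : IsTailVector x b) (hy : ¬HasSignChanges y 2)
    (hy0 : ∀ j : Fin n, b ≤ j → (j : ℕ) + 2 ≤ n → y j = 0) :
    ¬HasSignChanges (x - y) 6 := by
  obtain ⟨p, q, rfl, hpq, hqn, -, hx⟩ := hx
  have hyq : ∀ j : Fin n, y j ≠ 0 → (j : ℕ) ≤ q ∨ (j : ℕ) = n - 1 := fun j hj => by
    by_contra! h; exact hj (hy0 j (by omega) (by omega))
  intro h
  obtain ⟨σ, ⟨hσp, hσn⟩ | ⟨hσp, hσn⟩⟩ := exists_splitsAt hy <;>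
  rcases hx with ⟨hxpos, hxneg⟩ | ⟨hxpos, hxneg⟩
  · obtain ⟨j₀, j₁, j₂, j₃, j₄, j₅, j₆, h₀₁, h₁₂, h₂₃, h₃₄, h₄₅, h₅₆, h₆, hj⟩ :=
      exists_alternating_of_hasSignChanges_six_sub
        (N := fun j => (j ≤ q ∨ j = n - 1) ∧ j < σ)
        (P := fun j => j = p ∨ j = p + 1 ∨ j = q ∨ j = q + 1 ∨ j = n - 1 ∨
          (j ≤ q ∨ j = n - 1) ∧ σ ≤ j)
        (by rintro j (hj | hj)
            · exact absurd hj (not_lt.2 (hxneg j))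
            · have := hyq j hj.ne'; have := hσp j hj; omega)
        (by rintro j (hj | hj)
            · have := hxpos j hj; omega
            · have := hyq j hj.ne; have := hσn j hj; omega) h
    omega
  · obtain ⟨j₀, j₁, j₂, j₃, j₄, j₅, j₆, h₀₁, h₁₂, h₂₃, h₃₄, h₄₅, h₅₆, h₆, hj⟩ :=
      exists_alternating_of_hasSignChanges_six_sub
        (N := fun j => j = q ∨ j = q + 1 ∨ j = n - 1 ∨ (j ≤ q ∨ j = n - 1) ∧ j < σ)
        (P := fun j => j = p ∨ j = p + 1 ∨ (j ≤ q ∨ j = n - 1) ∧ σ ≤ j)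
        (by rintro j (hj | hj)
            · have := hxneg j hj; omega
            · have := hyq j hj.ne'; have := hσp j hj; omega)
        (by rintro j (hj | hj)
            · have := hxpos j hj; omega
            · have := hyq j hj.ne; have := hσn j hj; omega) h
    omega
  · obtain ⟨j₀, j₁, j₂, j₃, j₄, j₅, j₆, h₀₁, h₁₂, h₂₃, h₃₄, h₄₅, h₅₆, h₆, hj⟩ :=
      exists_alternating_of_hasSignChanges_six_sub
        (N := fun j => (j ≤ q ∨ j = n - 1) ∧ σ ≤ j)
        (P := fun j => j = p ∨ j = p + 1 ∨ j = q ∨ j = q + 1 ∨ j = n - 1 ∨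
          (j ≤ q ∨ j = n - 1) ∧ j < σ)
        (by rintro j (hj | hj)
            · exact absurd hj (not_lt.2 (hxneg j))
            · have := hyq j hj.ne'; have := hσn j (by simpa using hj); omega)
        (by rintro j (hj | hj)
            · have := hxpos j hj; omega
            · have := hyq j hj.ne; have := hσp j (by simpa using hj); omega) h
    omega
  · obtain ⟨j₀, j₁, j₂, j₃, j₄, j₅, j₆, h₀₁, h₁₂, h₂₃, h₃₄, h₄₅, h₅₆, h₆, hj⟩ :=
      exists_alternating_of_hasSignChanges_six_sub
        (N := fun j => j = q ∨ j = q + 1 ∨ j = n - 1 ∨ (j ≤ q ∨ j = n - 1) ∧ σ ≤ j)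
        (P := fun j => j = p ∨ j = p + 1 ∨ (j ≤ q ∨ j = n - 1) ∧ j < σ)
        (by rintro j (hj | hj)
            · have := hxneg j hj; omega
            · have := hyq j hj.ne'; have := hσn j (by simpa using hj); omega)
        (by rintro j (hj | hj)
            · have := hxpos j hj; omega
            · have := hyq j hj.ne; have := hσp j (by simpa using hj); omega) h
    omega

theorem IsHeadVector.mulVec_ne {x y : Fin n → ℝ} {a : ℕ} (hx : IsHeadVector x a)
    {Z : Matrix (Fin 6) (Fin n) ℝ} (hZ : MinorsPos Z) (hn : 6 ≤ n) (hy : ¬HasSignChanges y 2)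
    (hy0 : ∀ j : Fin n, (j : ℕ) ≤ a → y j = 0) : Z *ᵥ x ≠ Z *ᵥ y := by
  intro hxy
  refine hx.not_hasSignChanges_six_sub hy hy0 (hZ.hasSignChanges_of_mulVec_eq_zero hn
    (by rw [mulVec_sub, hxy, sub_self]) fun h => ?_)
  obtain ⟨p, hap, hpn, hxa, -⟩ := hx
  have hxa := hxa ⟨a, by omega⟩ rfl
  rw [sub_eq_zero.1 h, hy0 _ le_rfl] at hxa
  exact hxa.false

theorem IsTailVector.mulVec_ne {x y : Fin n → ℝ} {b : ℕ} (hx : IsTailVector x b)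
    {Z : Matrix (Fin 6) (Fin n) ℝ} (hZ : MinorsPos Z) (hn : 6 ≤ n) (hy : ¬HasSignChanges y 2)
    (hy0 : ∀ j : Fin n, b ≤ j → (j : ℕ) + 2 ≤ n → y j = 0) : Z *ᵥ x ≠ Z *ᵥ y := by
  intro hxy
  refine hx.not_hasSignChanges_six_sub hy hy0 (hZ.hasSignChanges_of_mulVec_eq_zero hn
    (by rw [mulVec_sub, hxy, sub_self]) fun h => ?_)
  obtain ⟨p, q, rfl, hpq, hqn, hxb, -⟩ := hx
  have hxb := hxb ⟨q + 1, by omega⟩ rfl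
  rw [sub_eq_zero.1 h, hy0 _ le_rfl (by simp only; omega)] at hxb
  exact hxb rfl

structure SupportRange (V : Submodule ℝ (Fin n → ℝ)) (a b : ℕ) : Prop where
  eq_zero_of_lt : ∀ v ∈ V, ∀ j : Fin n, (j : ℕ) < a → v j = 0
  eq_zero_of_gt : ∀ v ∈ V, ∀ j : Fin n, b < j → (j : ℕ) + 2 ≤ n → v j = 0
  head : ∃ x ∈ V, IsHeadVector x a
  tail : ∃ x ∈ V, IsTailVector x b

namespace SupportRange

variable {V : Submodule ℝ (Fin n → ℝ)} {a b : ℕ}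

theorem min_iff (h : SupportRange V a b) (j : Fin n) :
    ((∃ v ∈ V, v j ≠ 0) ∧ ∀ j' : Fin n, j' < j → ∀ v ∈ V, v j' = 0) ↔ (j : ℕ) = a := by
  obtain ⟨x, hxV, p, hap, hpn, hxa, -⟩ := h.head
  constructor
  · rintro ⟨⟨v, hv, hvj⟩, hmin⟩
    rcases lt_trichotomy (j : ℕ) a with hja | hja | hja
    · exact absurd (h.eq_zero_of_lt v hv j hja) hvj
    · exact hja
    · exact absurd (hmin ⟨a, by omega⟩ hja x hxV) (hxa _ rfl).ne'
  · intro hja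
    exact ⟨⟨x, hxV, (hxa j hja).ne'⟩,
      fun j' hj' v hv => h.eq_zero_of_lt v hv j' (hja ▸ hj')⟩

theorem max_iff (h : SupportRange V a b) (j : Fin n) (hj : (j : ℕ) + 2 ≤ n) :
    ((∃ v ∈ V, v j ≠ 0) ∧
        ∀ j' : Fin n, j < j' → (j' : ℕ) + 2 ≤ n → ∀ v ∈ V, v j' = 0) ↔ (j : ℕ) = b := by
  obtain ⟨x, hxV, p, q, rfl, hpq, hqn, hxb, -⟩ := h.tail
  constructor
  · rintro ⟨⟨v, hv, hvj⟩, hmax⟩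
    rcases lt_trichotomy (j : ℕ) (q + 1) with hjb | hjb | hjb
    · exact absurd (hmax ⟨q + 1, by omega⟩ hjb (by simp only; omega) x hxV) (hxb _ rfl)
    · exact hjb
    · exact absurd (h.eq_zero_of_gt v hv j hjb hj) hvj
  · intro hjb
    exact ⟨⟨x, hxV, hxb j hjb⟩,
      fun j' hj' hj'n v hv => h.eq_zero_of_gt v hv j' (hjb ▸ hj') hj'n⟩

theorem le_of_map_le {V' : Submodule ℝ (Fin n → ℝ)} {a' b' : ℕ} {Z : Matrix (Fin 6) (Fin n) ℝ}
    (hZ : MinorsPos Z) (hn : 6 ≤ n) (h : SupportRange V a b) (h' : SupportRange V' a' b')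
    (hV' : IsTNNSubspace 2 n V') (hZV : V.map Z.mulVecLin ≤ V'.map Z.mulVecLin) :
    a' ≤ a ∧ b ≤ b' := by
  have hZV : ∀ x ∈ V, ∃ y ∈ V', Z *ᵥ x = Z *ᵥ y := fun x hx => by
    obtain ⟨y, hy, hxy⟩ := hZV ⟨x, hx, rfl⟩
    exact ⟨y, hy, hxy.symm⟩
  constructor
  · by_contra! ha
    obtain ⟨x, hxV, hx⟩ := h.head
    obtain ⟨y, hy, hxy⟩ := hZV x hxV
    exact hx.mulVec_ne hZ hn (hV'.not_hasSignChanges_two hy)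
      (fun j hj => h'.eq_zero_of_lt y hy j (by omega)) hxy
  · by_contra! hb
    obtain ⟨x, hxV, hx⟩ := h.tail
    obtain ⟨y, hy, hxy⟩ := hZV x hxV
    exact hx.mulVec_ne hZ hn (hV'.not_hasSignChanges_two hy)
      (fun j hj hjn => h'.eq_zero_of_gt y hy j (by omega) hjn) hxy

end SupportRange

namespace IsPosDominoAt

variable {i : Fin n} {d : Fin n → ℝ}

theorem pos_iff (h : IsPosDominoAt i d) (hi : (i : ℕ) + 1 < n) (j : Fin n) :
    0 < d j ↔ (j : ℕ) = i ∨ (j : ℕ) = i + 1 := by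
  obtain ⟨hd, hdi⟩ := h
  rw [IsDominoAt, dif_pos hi] at hd
  constructor
  · intro hj
    by_contra! hji
    exact hj.ne' (hd.2 j hji.1 hji.2)
  · rintro (hj | hj)
    · rwa [Fin.ext hj]
    · rw [show j = ⟨i + 1, hi⟩ from Fin.ext hj]
      exact pos_of_mul_pos_right hd.1 hdi.le

theorem nonneg (h : IsPosDominoAt i d) (hi : (i : ℕ) + 1 < n) (j : Fin n) : 0 ≤ d j := by
  by_cases hj : (j : ℕ) = i ∨ (j : ℕ) = i + 1
  · exact ((h.pos_iff hi j).2 hj).le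
  · obtain ⟨hd, -⟩ := h
    rw [IsDominoAt, dif_pos hi] at hd
    push Not at hj
    exact (hd.2 j hj.1 hj.2).ge

theorem eq_zero (h : IsPosDominoAt i d) (hi : (i : ℕ) + 1 < n) {j : Fin n} (hj : (j : ℕ) ≠ i)
    (hj' : (j : ℕ) ≠ i + 1) : d j = 0 :=
  le_antisymm (not_lt.1 fun hpos => by have := (h.pos_iff hi j).1 hpos; omega) (h.nonneg hi j)

end IsPosDominoAt

theorem apply_eq_zero_of_mem_span_pair {d e v : Fin n → ℝ} (hv : v ∈ Submodule.span ℝ {d, e})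
    {j : Fin n} (hd : d j = 0) (he : e j = 0) : v j = 0 := by
  obtain ⟨α, β, rfl⟩ := Submodule.mem_span_pair.1 hv
  simp [hd, he]

theorem apply_eq_of_barVec_eq {v w : Fin n → ℝ} (h : barVec v = w) {j : Fin n}
    (hj : (j : ℕ) ≠ n - 1) : v j = w j := by
  simpa [barVec, hj] using congrFun h j

section Dominoes

variable {i₁ i₂ : Fin n} {d d₁ d₂ : Fin n → ℝ}

theorem isHeadVector_of_barVec_eq_add (h₁ : IsPosDominoAt i₁ d₁) (h₂ : IsPosDominoAt i₂ d₂)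
    (h₁₂ : (i₁ : ℕ) + 1 < i₂) (h₂n : (i₂ : ℕ) + 3 ≤ n) (hd : barVec d = d₁ + d₂)
    (hdL : ∀ j : Fin n, (j : ℕ) = n - 1 → d j < 0) : IsHeadVector d i₁ := by
  replace hd : ∀ {j : Fin n}, (j : ℕ) ≠ n - 1 → d j = d₁ j + d₂ j := apply_eq_of_barVec_eq hd
  refine ⟨i₂, h₁₂, by omega, fun j hj => ?_, fun j hj => ?_, fun j hj => ?_⟩
  · rw [hd (by omega), h₂.eq_zero (by omega) (by omega) (by omega), add_zero]
    exact (h₁.pos_iff (by omega) j).2 (Or.inl hj)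
  · have hjL : (j : ℕ) ≠ n - 1 := fun hjL => (hdL j hjL).not_gt hj
    by_contra! hj'
    rw [hd hjL, h₁.eq_zero (by omega) hj'.1 hj'.2.1,
      h₂.eq_zero (by omega) hj'.2.2.1 hj'.2.2.2, add_zero] at hj
    exact hj.false
  · by_contra! hj'
    rw [hd hj'.2.2] at hj
    linarith [h₁.nonneg (by omega) j, h₂.nonneg (by omega) j]

theorem isTailVector_of_barVec_eq_add (h₁ : IsPosDominoAt i₁ d₁) (h₂ : IsPosDominoAt i₂ d₂)
    (h₁₂ : (i₁ : ℕ) + 1 < i₂) (h₂n : (i₂ : ℕ) + 3 ≤ n) (hd : barVec d = d₁ + d₂)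
    (hdL : ∀ j : Fin n, (j : ℕ) = n - 1 → 0 < d j) : IsTailVector d (i₂ + 1) := by
  replace hd : ∀ {j : Fin n}, (j : ℕ) ≠ n - 1 → d j = d₁ j + d₂ j := apply_eq_of_barVec_eq hd
  refine ⟨i₁, i₂, rfl, h₁₂, by omega, fun j hj => ?_, Or.inl ⟨fun j hj => ?_, fun j => ?_⟩⟩
  · rw [hd (by omega)]
    exact (add_pos_of_nonneg_of_pos (h₁.nonneg (by omega) j)
      ((h₂.pos_iff (by omega) j).2 (Or.inr hj))).ne'
  · by_contra! hj'
    rw [hd hj'.2.2.2.2, h₁.eq_zero (by omega) hj'.1 hj'.2.1,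
      h₂.eq_zero (by omega) hj'.2.2.1 hj'.2.2.2.1, add_zero] at hj
    exact hj.false
  · by_cases hjL : (j : ℕ) = n - 1
    · exact (hdL j hjL).le
    · rw [hd hjL]
      exact add_nonneg (h₁.nonneg (by omega) j) (h₂.nonneg (by omega) j)

theorem isHeadVector_and_isTailVector_of_barVec_eq_sub (h₁ : IsPosDominoAt i₁ d₁)
    (h₂ : IsPosDominoAt i₂ d₂) (h₁₂ : (i₁ : ℕ) + 1 < i₂) (h₂n : (i₂ : ℕ) + 3 ≤ n)
    (hd : barVec d = d₁ - d₂) (hdL : ∀ j : Fin n, (j : ℕ) = n - 1 → d j < 0) :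
    IsHeadVector d i₁ ∧ IsTailVector d (i₂ + 1) := by
  replace hd : ∀ {j : Fin n}, (j : ℕ) ≠ n - 1 → d j = d₁ j - d₂ j := apply_eq_of_barVec_eq hd
  have hpos : ∀ j : Fin n, 0 < d j → (j : ℕ) = i₁ ∨ (j : ℕ) = i₁ + 1 := fun j hj => by
    have hjL : (j : ℕ) ≠ n - 1 := fun hjL => (hdL j hjL).not_gt hj
    by_contra! hj'
    rw [hd hjL, h₁.eq_zero (by omega) hj'.1 hj'.2] at hj
    linarith [h₂.nonneg (by omega) j]
  have hneg : ∀ j : Fin n, d j < 0 → (j : ℕ) = i₂ ∨ (j : ℕ) = i₂ + 1 ∨ (j : ℕ) = n - 1 :=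
    fun j hj => by
    by_contra! hj'
    rw [hd hj'.2.2, h₂.eq_zero (by omega) hj'.1 hj'.2.1] at hj
    linarith [h₁.nonneg (by omega) j]
  refine ⟨⟨i₂, h₁₂, by omega, fun j hj => ?_, fun j hj => by have := hpos j hj; omega,
      fun j hj => by have := hneg j hj; omega⟩,
    ⟨i₁, i₂, rfl, h₁₂, by omega, fun j hj => ?_, Or.inr ⟨hpos, hneg⟩⟩⟩
  · rw [hd (by omega), h₂.eq_zero (by omega) (by omega) (by omega), sub_zero]
    exact (h₁.pos_iff (by omega) j).2 (Or.inl hj)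
  · rw [hd (by omega), h₁.eq_zero (by omega) (by omega) (by omega), zero_sub, neg_ne_zero]
    exact ((h₂.pos_iff (by omega) j).2 (Or.inr hj)).ne'

end Dominoes

theorem IsOrthodox.exists_supportRange {V : Submodule ℝ (Fin n → ℝ)} (h : IsOrthodox V) :
    ∃ a b, SupportRange V a b := by
  obtain ⟨d, e, d₁, d₂, d₃, d₄, ⟨i₁, i₂, i₃, i₄, h₁, h₂, h₃, h₄, h₁₂, h₂₃, h₃₄, h₄n⟩, -, rfl,
    hd, hdL, he, heL⟩ := h
  have hvanish : ∀ v ∈ Submodule.span ℝ {d, e}, ∀ j : Fin n,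
      (j : ℕ) < i₁ ∨ (i₄ : ℕ) + 1 < j ∧ (j : ℕ) + 2 ≤ n → v j = 0 := fun v hv j hj => by
    refine apply_eq_zero_of_mem_span_pair hv ?_ ?_
    · rw [apply_eq_of_barVec_eq hd (by omega), Pi.add_apply,
        h₁.eq_zero (by omega) (by omega) (by omega), h₂.eq_zero (by omega) (by omega) (by omega),
        add_zero]
    · rw [apply_eq_of_barVec_eq he (by omega), Pi.add_apply,
        h₃.eq_zero (by omega) (by omega) (by omega), h₄.eq_zero (by omega) (by omega) (by omega),
        add_zero]
  exact ⟨i₁, i₄ + 1, fun v hv j hj => hvanish v hv j (.inl hj),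
    fun v hv j hj hjn => hvanish v hv j (.inr ⟨hj, hjn⟩),
    ⟨d, Submodule.subset_span (by simp),
      isHeadVector_of_barVec_eq_add h₁ h₂ h₁₂ (by omega) hd hdL⟩,
    ⟨e, Submodule.subset_span (by simp),
      isTailVector_of_barVec_eq_add h₃ h₄ h₃₄ h₄n he heL⟩⟩

theorem IsDeviant.exists_supportRange {V : Submodule ℝ (Fin n → ℝ)} (h : IsDeviant V) :
    ∃ a b, SupportRange V a b := by
  obtain ⟨d, e, d₁, d₂, d₃, d₄, ⟨i₁, i₂, i₃, i₄, h₁, h₂, h₃, h₄, h₁₂, h₂₃, h₃₄, h₄n⟩, -, rfl,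
    hd, hdL, rfl⟩ := h
  have hvanish : ∀ v ∈ Submodule.span ℝ {d, d₁ + d₂ + d₃}, ∀ j : Fin n,
      (j : ℕ) < i₁ ∨ (i₄ : ℕ) + 1 < j ∧ (j : ℕ) + 2 ≤ n → v j = 0 := fun v hv j hj => by
    refine apply_eq_zero_of_mem_span_pair hv ?_ ?_
    · rw [apply_eq_of_barVec_eq hd (by omega), Pi.sub_apply,
        h₁.eq_zero (by omega) (by omega) (by omega), h₄.eq_zero (by omega) (by omega) (by omega),
        sub_zero]
    · rw [Pi.add_apply, Pi.add_apply, h₁.eq_zero (by omega) (by omega) (by omega),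
        h₂.eq_zero (by omega) (by omega) (by omega), h₃.eq_zero (by omega) (by omega) (by omega),
        add_zero, add_zero]
  obtain ⟨hhead, htail⟩ :=
    isHeadVector_and_isTailVector_of_barVec_eq_sub h₁ h₄ (by omega) h₄n hd hdL
  exact ⟨i₁, i₄ + 1, fun v hv j hj => hvanish v hv j (.inl hj),
    fun v hv j hj hjn => hvanish v hv j (.inr ⟨hj, hjn⟩),
    ⟨d, Submodule.subset_span (by simp), hhead⟩, ⟨d, Submodule.subset_span (by simp), htail⟩⟩

theorem IsOrthodox.six_le {V : Submodule ℝ (Fin n → ℝ)} (h : IsOrthodox V) : 6 ≤ n := by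
  obtain ⟨-, -, -, -, -, -, ⟨i₁, i₂, i₃, i₄, -, -, -, -, h⟩, -⟩ := h
  omega

theorem IsDeviant.six_le {V : Submodule ℝ (Fin n → ℝ)} (h : IsDeviant V) : 6 ≤ n := by
  obtain ⟨-, -, -, -, -, -, ⟨i₁, i₂, i₃, i₄, -, -, -, -, h⟩, -⟩ := h
  omega

/-- Lemma 10.12: if `V, V'` are 2-dimensional totally nonnegative subspaces, each
orthodox or deviant, and `Z(V) = Z(V')` for a totally positive `6 × n` matrix `Z`,
then `V` and `V'` have the same minimal support index, and the same maximal
support index among indices `j ≤ n - 2` (0-based; i.e. `j ≤ n - 1` in the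
paper's 1-based indexing). -/
theorem equal_support_range (n : ℕ) (Z : Matrix (Fin 6) (Fin n) ℝ)
    (hZ : MinorsPos Z) (V V' : Submodule ℝ (Fin n → ℝ))
    (hV : IsTNNSubspace 2 n V) (hV' : IsTNNSubspace 2 n V')
    (hVod : IsOrthodox V ∨ IsDeviant V) (hV'od : IsOrthodox V' ∨ IsDeviant V')
    (hZV : V.map Z.mulVecLin = V'.map Z.mulVecLin) :
    (∀ j : Fin n,
      ((∃ v ∈ V, v j ≠ 0) ∧ ∀ j' : Fin n, j' < j → ∀ v ∈ V, v j' = 0) ↔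
      ((∃ v ∈ V', v j ≠ 0) ∧ ∀ j' : Fin n, j' < j → ∀ v ∈ V', v j' = 0)) ∧
    (∀ j : Fin n, (j : ℕ) + 2 ≤ n →
      (((∃ v ∈ V, v j ≠ 0) ∧
          ∀ j' : Fin n, j < j' → (j' : ℕ) + 2 ≤ n → ∀ v ∈ V, v j' = 0) ↔
        ((∃ v ∈ V', v j ≠ 0) ∧
          ∀ j' : Fin n, j < j' → (j' : ℕ) + 2 ≤ n → ∀ v ∈ V', v j' = 0))) := by
  have hn : 6 ≤ n := hVod.elim IsOrthodox.six_le IsDeviant.six_le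
  obtain ⟨a, b, hS⟩ := hVod.elim IsOrthodox.exists_supportRange IsDeviant.exists_supportRange
  obtain ⟨a', b', hS'⟩ :=
    hV'od.elim IsOrthodox.exists_supportRange IsDeviant.exists_supportRange
  obtain ⟨ha', hb⟩ := hS.le_of_map_le hZ hn hS' hV' hZV.le
  obtain ⟨ha, hb'⟩ := hS'.le_of_map_le hZ hn hS hV hZV.ge
  refine ⟨fun j => ?_, fun j hj => ?_⟩
  · rw [hS.min_iff, hS'.min_iff, le_antisymm ha ha']
  · rw [hS.max_iff j hj, hS'.max_iff j hj, le_antisymm hb hb']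
end

section
/- Let k ≥ 1, n ≥ k + 2, and let 1 ≤ s_1 < s_2 < … < s_k ≤ n − 2 be integers. Suppose v^(1), …, v^(k) ∈ ℝ^n satisfy, for each i ∈ {1, …, k}: v^(i)_j = 0 for all j ∉ {s_i, s_i + 1, n}, v^(i)_{s_i} > 0, v^(i)_{s_i + 1} > 0, and (−1)^{k−i} v^(i)_n > 0. Then v^(1), …, v^(k) are linearly independent, and their span is a k-dimensional totally nonnegative subspace of ℝ^n. -/
private lemma perm_eq_one_of_strictMono {k : ℕ} {σ : Equiv.Perm (Fin k)}
    (h : StrictMono (⇑σ)) : σ = 1 := by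
  have hr : Set.range (⇑σ) = Set.range (id : Fin k → Fin k) := by
    simp [Set.range_eq_univ.2 σ.surjective]
  have inst : WellFoundedLT (Fin k) := inferInstance
  have h2 : (⇑σ) = (id : Fin k → Fin k) := (StrictMono.range_inj h strictMono_id).mp hr
  exact Equiv.ext fun i => congrFun h2 i

private lemma aux_strictMono {k m : ℕ} {s : Fin k → ℕ} (hs : StrictMono s)
    {g : Fin m → Fin k} (hg : Function.Injective g) {c : Fin m → ℕ} (hc : StrictMono c)
    (h : ∀ i, c i = s (g i) ∨ c i = s (g i) + 1) : StrictMono g := by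
  intro i j hij
  by_contra hcon
  have hne : g j ≠ g i := fun e => hij.ne (hg e.symm)
  have hlt : g j < g i := lt_of_le_of_ne (not_lt.1 hcon) hne
  have h1 : s (g j) < s (g i) := hs hlt
  have h2 : c i < c j := hc hij
  rcases h i with e1 | e1 <;> rcases h j with e2 | e2 <;> omega

private lemma sign_aux {k : ℕ} : ∀ (m : ℕ) (σ : Equiv.Perm (Fin (k+1))) (r : Fin (k+1)),
    σ (Fin.last k) = r → StrictMono (fun i : Fin k => σ i.castSucc) →
    k - (r : ℕ) = m → Equiv.Perm.sign σ = (-1) ^ m := by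
  intro m
  induction m with
  | zero =>
    intro σ r hlast hmono hm
    have hr : (r : ℕ) = k := by have := r.isLt; omega
    have hσ : StrictMono (⇑σ) := by
      intro i j hij
      rcases eq_or_ne j (Fin.last k) with rfl | hj
      · have hi : i ≠ Fin.last k := hij.ne
        have h2 : σ (Fin.last k) = Fin.last k := by rw [hlast]; exact Fin.ext hr
        have h1 : σ i ≠ Fin.last k := fun e => hi (σ.injective (e.trans h2.symm))
        rw [h2]
        exact Fin.lt_last_iff_ne_last.2 h1
      · obtain ⟨j', rfl⟩ := Fin.exists_castSucc_eq.2 hj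
        obtain ⟨i', rfl⟩ := Fin.exists_castSucc_eq.2
          (Fin.lt_last_iff_ne_last.1 (hij.trans (Fin.castSucc_lt_last j')))
        exact hmono (Fin.castSucc_lt_castSucc_iff.1 hij)
    rw [perm_eq_one_of_strictMono hσ]
    simp
  | succ m ih =>
    intro σ r hlast hmono hm
    have hrk : (r : ℕ) < k := by have := r.isLt; omega
    set r' : Fin (k+1) := ⟨(r : ℕ) + 1, by omega⟩ with hr'
    have hne : r ≠ r' := Fin.ne_of_val_ne (by simp [hr'])
    set σ' : Equiv.Perm (Fin (k+1)) := Equiv.swap r r' * σ with hσ'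
    have hcs_ne : ∀ i : Fin k, σ i.castSucc ≠ r := by
      intro i e
      have := σ.injective (e.trans hlast.symm)
      exact absurd this (Fin.castSucc_lt_last i).ne
    have hlast' : σ' (Fin.last k) = r' := by
      simp [hσ', Equiv.Perm.mul_apply, hlast, Equiv.swap_apply_left]
    have key : ∀ x : Fin (k+1), x ≠ r →
        ((Equiv.swap r r' x : Fin (k+1)) : ℕ) =
          if (x : ℕ) = (r : ℕ) + 1 then (r : ℕ) else (x : ℕ) := by
      intro x hx
      rcases eq_or_ne x r' with rfl | h
      · rw [Equiv.swap_apply_right, if_pos rfl]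
      · rw [Equiv.swap_apply_of_ne_of_ne hx h, if_neg]
        intro e
        exact h (Fin.ext (by simpa [hr'] using e))
    have hmono' : StrictMono (fun i : Fin k => σ' i.castSucc) := by
      intro i j hij
      have hab : ((σ i.castSucc : Fin (k+1)) : ℕ) < ((σ j.castSucc : Fin (k+1)) : ℕ) := hmono hij
      have hai : ((σ i.castSucc : Fin (k+1)) : ℕ) ≠ (r : ℕ) := fun e => hcs_ne i (Fin.ext e)
      have haj : ((σ j.castSucc : Fin (k+1)) : ℕ) ≠ (r : ℕ) := fun e => hcs_ne j (Fin.ext e)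
      show σ' i.castSucc < σ' j.castSucc
      rw [Fin.lt_def]
      simp only [hσ', Equiv.Perm.mul_apply]
      rw [key _ (hcs_ne i), key _ (hcs_ne j)]
      split_ifs <;> omega
    have hm' : k - (r' : ℕ) = m := by simp [hr']; omega
    have hsig' := ih σ' r' hlast' hmono' hm'
    have hσeq : σ = Equiv.swap r r' * σ' := by
      rw [hσ', ← mul_assoc, Equiv.swap_mul_self, one_mul]
    rw [hσeq, map_mul, Equiv.Perm.sign_swap hne, hsig', pow_succ]
    exact (mul_comm _ _)



/-- The vectors `v 0, …, v (k-1)` have the distinguished "m = 2 domino" shape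
determined by the 0-based indices `s 0 < s 1 < … < s (k-1) ≤ n - 3`: the `i`-th
vector is supported on coordinates `s i`, `s i + 1` and the last coordinate `n - 1`;
its entries at `s i` and `s i + 1` are positive, and its last entry has sign
`(-1)^(k - 1 - i)`. (In the paper's 1-based notation, `1 ≤ s_1 < … < s_k ≤ n - 2`
and the last coordinate is `n`.) -/
def M2Shape (n k : ℕ) (s : Fin k → ℕ) (v : Fin k → Fin n → ℝ) : Prop :=
  StrictMono s ∧ (∀ i, s i + 3 ≤ n) ∧
  ∀ i : Fin k,
    (∀ j : Fin n, (j : ℕ) ≠ s i → (j : ℕ) ≠ s i + 1 → (j : ℕ) ≠ n - 1 → v i j = 0) ∧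
    (∀ j : Fin n, (j : ℕ) = s i → 0 < v i j) ∧
    (∀ j : Fin n, (j : ℕ) = s i + 1 → 0 < v i j) ∧
    (∀ j : Fin n, (j : ℕ) = n - 1 → 0 < (-1 : ℝ) ^ (k - 1 - (i : ℕ)) * v i j)

/-- Part of Lemma 4.4: vectors of the distinguished `m = 2` shape are linearly
independent and span a `k`-dimensional totally nonnegative subspace of `ℝ^n`. -/
theorem m2_shape_tnn (k n : ℕ) (hk : 1 ≤ k) (hn : k + 2 ≤ n)
    (s : Fin k → ℕ) (v : Fin k → Fin n → ℝ) (hv : M2Shape n k s v) :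
    LinearIndependent ℝ v ∧
    IsTNNSubspace k n (Submodule.span ℝ (Set.range v)) := by
  obtain ⟨hs, h3, hvi⟩ := hv
  have hlin : LinearIndependent ℝ v := by
    rw [Fintype.linearIndependent_iff]
    intro g hg
    have key : ∀ N : ℕ, ∀ i : Fin k, (i : ℕ) = N → g i = 0 := by
      intro N
      induction N using Nat.strong_induction_on with
      | _ N ih =>
        intro i hiN
        have hcval : s i < n := by have := h3 i; omega
        set c : Fin n := ⟨s i, hcval⟩ with hc
        have hcv : (c : ℕ) = s i := rfl
        have hcoord : ∑ j, g j * v j c = 0 := by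
          have h0 := congrFun hg c
          simpa [Finset.sum_apply, Pi.smul_apply, smul_eq_mul] using h0
        have hz : ∀ j ∈ Finset.univ, j ≠ i → g j * v j c = 0 := by
          intro j _ hj
          rcases lt_or_gt_of_ne hj with hlt | hgt
          · have hjN : (j : ℕ) < N := by have := Fin.lt_def.1 hlt; omega
            rw [ih (j : ℕ) hjN j rfl, zero_mul]
          · have hsij : s i < s j := hs hgt
            have hv0 : v j c = 0 := by
              refine (hvi j).1 c ?_ ?_ ?_ <;> rw [hcv] <;> [omega; omega; skip]
              have := h3 i; omega
            rw [hv0, mul_zero]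
        rw [Finset.sum_eq_single_of_mem i (Finset.mem_univ i) hz] at hcoord
        have hpos : 0 < v i c := (hvi i).2.1 c hcv
        exact (mul_eq_zero.1 hcoord).resolve_right hpos.ne'
    exact fun i => key (i : ℕ) i rfl
  refine ⟨hlin, ?_⟩
  obtain _ | k := k
  · exact absurd hk (by norm_num)
  refine ⟨Matrix.of v, hlin, rfl, ?_⟩
  intro f hf
  rw [Matrix.det_apply']
  apply Finset.sum_nonneg
  intro σ _
  simp only [Matrix.submatrix_apply, id_eq, Matrix.of_apply]
  by_cases hzero : ∀ i, v (σ i) (f i) ≠ 0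
  · have hsupp : ∀ i, ((f i : ℕ) = s (σ i) ∨ (f i : ℕ) = s (σ i) + 1) ∨ (f i : ℕ) = n - 1 := by
      intro i
      by_contra hcon
      push_neg at hcon
      exact hzero i ((hvi (σ i)).1 (f i) hcon.1.1 hcon.1.2 hcon.2)
    by_cases hlastc : ((f (Fin.last k) : ℕ) = n - 1)
    · -- some row uses the last column
      have hflt : ∀ i : Fin k, ((f i.castSucc : ℕ)) < n - 1 := by
        intro i
        have h1 := Fin.lt_def.1 (hf (Fin.castSucc_lt_last i))
        omega
      have hsuppB : ∀ i : Fin k,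
          (f i.castSucc : ℕ) = s (σ i.castSucc) ∨ (f i.castSucc : ℕ) = s (σ i.castSucc) + 1 := by
        intro i
        rcases hsupp i.castSucc with h | h
        · exact h
        · exact absurd h (by have := hflt i; omega)
      have hmonoB : StrictMono (fun i : Fin k => σ i.castSucc) :=
        aux_strictMono hs (fun a b hab => Fin.castSucc_injective k (σ.injective hab))
          (c := fun i => (f i.castSucc : ℕ))
          (fun a b hab => Fin.lt_def.1 (hf (Fin.castSucc_lt_castSucc_iff.2 hab)))
          hsuppB
      have hsig := sign_aux (k - ((σ (Fin.last k)) : ℕ)) σ (σ (Fin.last k)) rfl hmonoB rfl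
      have hP : 0 < ∏ i : Fin k, v (σ i.castSucc) (f i.castSucc) := by
        apply Finset.prod_pos
        intro i _
        rcases hsuppB i with h | h
        · exact (hvi (σ i.castSucc)).2.1 (f i.castSucc) h
        · exact (hvi (σ i.castSucc)).2.2.1 (f i.castSucc) h
      have hlastpos :
          0 < (-1 : ℝ) ^ (k - ((σ (Fin.last k)) : ℕ)) * v (σ (Fin.last k)) (f (Fin.last k)) := by
        have h0 := (hvi (σ (Fin.last k))).2.2.2 (f (Fin.last k)) hlastc
        simpa using h0
      have hcast : ((Equiv.Perm.sign σ : ℤ) : ℝ) = (-1 : ℝ) ^ (k - ((σ (Fin.last k)) : ℕ)) := by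
        rw [hsig]; push_cast; ring
      rw [hcast, Fin.prod_univ_castSucc]
      have heq : (-1 : ℝ) ^ (k - ((σ (Fin.last k)) : ℕ)) *
            ((∏ i : Fin k, v (σ i.castSucc) (f i.castSucc)) * v (σ (Fin.last k)) (f (Fin.last k)))
          = (∏ i : Fin k, v (σ i.castSucc) (f i.castSucc)) *
            ((-1 : ℝ) ^ (k - ((σ (Fin.last k)) : ℕ)) * v (σ (Fin.last k)) (f (Fin.last k))) := by
        ring
      rw [heq]
      exact (mul_pos hP hlastpos).le
    · -- no row uses the last column
      have hfne : ∀ i, (f i : ℕ) ≠ n - 1 := by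
        intro i
        have h1 := Fin.le_def.1 (hf.monotone (Fin.le_last i))
        have h2 := (f (Fin.last k)).isLt
        omega
      have hsuppA : ∀ i, (f i : ℕ) = s (σ i) ∨ (f i : ℕ) = s (σ i) + 1 := by
        intro i
        rcases hsupp i with h | h
        · exact h
        · exact absurd h (hfne i)
      have hmonoA : StrictMono (⇑σ) :=
        aux_strictMono hs σ.injective (c := fun i => (f i : ℕ))
          (fun a b hab => Fin.lt_def.1 (hf hab)) hsuppA
      have hσ1 := perm_eq_one_of_strictMono hmonoA
      rw [hσ1] at hsuppA ⊢
      simp only [Equiv.Perm.one_apply, Equiv.Perm.sign_one] at hsuppA ⊢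
      have hP : 0 < ∏ i, v i (f i) := by
        apply Finset.prod_pos
        intro i _
        rcases hsuppA i with h | h
        · exact (hvi i).2.1 (f i) h
        · exact (hvi i).2.2.1 (f i) h
      simpa using hP.le
  · push_neg at hzero
    obtain ⟨i0, h0⟩ := hzero
    rw [Finset.prod_eq_zero (Finset.mem_univ i0) h0, mul_zero]
end
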